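/- arXiv:2106.08485 — 9 statements merged into one kernel-verified Lean document; each statement's English description precedes it below -/
import Mathlib

section
/- Let p > q be coprime positive integers with Euclidean remainders r_{-1}=p, r_0=q, r_1, ..., r_{n-1}=1, and suppose θ > 1 divides both p and r_i for some 1 ≤ i ≤ n-1. Then θ divides the convergent numerator p_i of p/q = [d_1,...,d_n]. -/
/-!
Along the Euclidean algorithm the quantity `r (j+1) * P j + r j * P (j+1)` is invariant, so it
always equals `p`. If `θ` divides `p` and `r (i+1)`, it therefore divides `r i * P (i+1)`, and
`θ` is coprime to `r i` because consecutive remainders are coprime.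

Indices are shifted by one: `r (j+1)` is the remainder `r_j` and `P (j+1)` the numerator `p_j`.
-/

section EuclideanRemainders

variable {r : ℕ → ℕ} (hrrec : ∀ i, r (i + 2) = r i % r (i + 1))
include hrrec

theorem coprime_succ_of_euclid (hcop : Nat.Coprime (r 0) (r 1)) (j : ℕ) :
    Nat.Coprime (r j) (r (j + 1)) := by
  induction j with
  | zero => exact hcop
  | succ k ih =>
    rw [Nat.Coprime, hrrec k, Nat.gcd_comm, ← Nat.gcd_rec, Nat.gcd_comm]
    exact ih

theorem mul_add_mul_convergent_eq_of_euclid {P : ℕ → ℕ} (hP0 : P 0 = 0) (hP1 : P 1 = 1)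
    (hPrec : ∀ i, P (i + 2) = (r i / r (i + 1)) * P (i + 1) + P i) (j : ℕ) :
    r (j + 1) * P j + r j * P (j + 1) = r 0 := by
  induction j with
  | zero => simp [hP0, hP1]
  | succ k ih =>
    rw [hrrec k, hPrec k, ← ih]
    conv_rhs => rw [← Nat.mod_add_div (r k) (r (k + 1))]
    ring

end EuclideanRemainders

theorem stmt3_general (p q θ : ℕ) (hcop : Nat.Coprime p q)
    (r : ℕ → ℕ) (hr0 : r 0 = p) (hr1 : r 1 = q)
    (hrrec : ∀ i, r (i + 2) = r i % r (i + 1))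
    (P : ℕ → ℕ)
    (hP0 : P 0 = 0) (hP1 : P 1 = 1)
    (hPrec : ∀ i, P (i + 2) = (r i / r (i + 1)) * P (i + 1) + P i)
    (hθp : θ ∣ p)
    (i : ℕ) (hθr : θ ∣ r (i + 1)) :
    θ ∣ P (i + 1) := by
  have hθsum : θ ∣ r (i + 1) * P i + r i * P (i + 1) := by
    rwa [mul_add_mul_convergent_eq_of_euclid hrrec hP0 hP1 hPrec, hr0]
  have hθprod : θ ∣ r i * P (i + 1) := (Nat.dvd_add_right (hθr.mul_right _)).mp hθsum
  have hθcop : Nat.Coprime θ (r i) :=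
    (Nat.Coprime.coprime_dvd_right hθr
      (coprime_succ_of_euclid hrrec (hr0 ▸ hr1 ▸ hcop) i)).symm
  exact hθcop.dvd_of_dvd_mul_left hθprod

/-- If `θ > 1` divides both `p` and the Euclidean remainder `rᵢ` (for some
`1 ≤ i ≤ n-1`) of the pair `(p,q)` with `p > q` coprime, then `θ` divides the
convergent numerator `pᵢ`.  Here `r (i+1)` stands for `rᵢ` (with `r₋₁ = p`,
`r₀ = q`) and `P (i+1)` stands for `pᵢ` (with `p₋₁ = 0`, `p₀ = 1`). -/
theorem stmt3 (p q n θ : ℕ) (hq : 0 < q) (hpq : q < p) (hcop : Nat.Coprime p q)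
    (r : ℕ → ℕ) (hr0 : r 0 = p) (hr1 : r 1 = q)
    (hrrec : ∀ i, r (i + 2) = r i % r (i + 1))
    (hn : r n = 1)
    (P : ℕ → ℕ)
    (hP0 : P 0 = 0) (hP1 : P 1 = 1)
    (hPrec : ∀ i, P (i + 2) = (r i / r (i + 1)) * P (i + 1) + P i)
    (hθ : 1 < θ) (hθp : θ ∣ p)
    (i : ℕ) (hi1 : 1 ≤ i) (hin : i ≤ n - 1) (hθr : θ ∣ r (i + 1)) :
    θ ∣ P (i + 1) :=
  stmt3_general p q θ hcop r hr0 hr1 hrrec P hP0 hP1 hPrec hθp i hθr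
end

section
/- If θ is a perfect-square-root order, i.e., p = θ² for some positive integer θ > 1, and q is coprime to p, then θ does not divide any remainder of the Euclidean algorithm applied to (p,q). (Consequently a simple knot of order θ in a lens space of order θ² fibers.) -/
/-!
Write the Euclidean algorithm backwards: `p = u * r (k - 1) + v * r k` with `u, v ≥ 1` at every
stage. If `θ ∣ r k` and `θ ∣ p`, then `θ ∣ u * r (k - 1)`; consecutive remainders are coprime, so
`θ ∣ u`. Hence `u ≥ θ`, and with `r (k - 1) > r k ≥ θ` this gives `p ≥ θ (θ + 1) + θ > θ²`.
-/

theorem mul_add_two_le_mul_add_mul {θ u v a b : ℕ} (hu : 0 < u) (hv : 0 < v) (hb : 0 < b)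
    (hba : b < a) (hθb : θ ∣ b) (hθa : Nat.Coprime θ a) (hθ : θ ∣ u * a + v * b) :
    θ * (θ + 2) ≤ u * a + v * b := by
  have hθua : θ ∣ u * a := (Nat.dvd_add_left (hθb.mul_left v)).mp hθ
  have hθu : θ ≤ u := Nat.le_of_dvd hu (hθa.dvd_of_dvd_mul_right hθua)
  have hθb' : θ ≤ b := Nat.le_of_dvd hb hθb
  calc θ * (θ + 2) = θ * (θ + 1) + 1 * θ := by ring
    _ ≤ u * a + v * b := by gcongr <;> omega

theorem gcd_remainders_eq {r : ℕ → ℕ} (hrec : ∀ i, r (i + 2) = r i % r (i + 1))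
    (i : ℕ) : Nat.gcd (r i) (r (i + 1)) = Nat.gcd (r 0) (r 1) := by
  induction i with
  | zero => rfl
  | succ n ih => rw [hrec n, Nat.gcd_comm, ← Nat.gcd_rec, Nat.gcd_comm, ih]

theorem exists_eq_mul_add_mul_remainders {r : ℕ → ℕ} (hrec : ∀ i, r (i + 2) = r i % r (i + 1))
    (h1 : 0 < r 1) (h10 : r 1 ≤ r 0) (j : ℕ) :
    ∃ u v, 0 < u ∧ 0 < v ∧ r 0 = u * r (j + 1) + v * r (j + 2) := by
  induction j with
  | zero =>
    refine ⟨r 0 / r 1, 1, Nat.div_pos h10 h1, one_pos, ?_⟩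
    rw [hrec 0, one_mul, Nat.mul_comm, Nat.div_add_mod]
  | succ n ih =>
    obtain ⟨u, v, hu, hv, hr0⟩ := ih
    refine ⟨u * (r (n + 1) / r (n + 2)) + v, u, by positivity, hu, ?_⟩
    rw [hrec (n + 1), hr0]
    conv_lhs => rw [← Nat.div_add_mod (r (n + 1)) (r (n + 2))]
    ring

/-- If `p = θ²` for some integer `θ > 1` and `q` is coprime to `p` with
`0 < q < p`, then `θ` does not divide any (positive) remainder of the
Euclidean algorithm applied to `(p,q)`.  Here `r (i+1)` stands for `rᵢ`
(with `r₋₁ = p`, `r₀ = q`), and the genuine remainders are the positive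
`rᵢ` with `i ≥ 1`. -/
theorem stmt5 (p q θ : ℕ) (hθ : 1 < θ) (hp : p = θ ^ 2)
    (hq : 0 < q) (hqp : q < p) (hcop : Nat.Coprime p q)
    (r : ℕ → ℕ) (hr0 : r 0 = p) (hr1 : r 1 = q)
    (hrrec : ∀ i, r (i + 2) = r i % r (i + 1)) :
    ∀ i : ℕ, 1 ≤ i → 0 < r (i + 1) → ¬ θ ∣ r (i + 1) := by
  rintro (_ | k) hk hpos hdvd
  · omega
  have hcop' : Nat.Coprime (r (k + 1)) (r (k + 2)) := by
    rw [Nat.Coprime, gcd_remainders_eq hrrec, hr0, hr1]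
    exact hcop
  rcases Nat.eq_zero_or_pos (r (k + 1)) with hzero | hprev
  · -- past the end of the algorithm the sequence continues as `1, 0, 1, 0, …`
    rw [hzero, Nat.coprime_zero_left] at hcop'
    exact Nat.not_dvd_of_pos_of_lt one_pos hθ (hcop' ▸ hdvd)
  have hlt : r (k + 2) < r (k + 1) := hrrec k ▸ Nat.mod_lt _ hprev
  obtain ⟨u, v, hu, hv, hrep⟩ := exists_eq_mul_add_mul_remainders hrrec
    (hr1 ▸ hq) (hr0 ▸ hr1 ▸ hqp.le) k
  have hθp : θ ∣ u * r (k + 1) + v * r (k + 2) := hrep ▸ hr0 ▸ hp ▸ dvd_pow_self θ two_ne_zero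
  have hbound := mul_add_two_le_mul_add_mul hu hv hpos hlt hdvd
    (Nat.Coprime.coprime_dvd_left hdvd hcop'.symm) hθp
  rw [← hrep, hr0, hp] at hbound
  nlinarith
end

section
/- Let p be a positive integer, q coprime to p with 0 < q < p, and 0 < k < p. Let q' be the inverse of q mod p, l = [q'k]_p the least positive residue, θ = p/gcd(p,k), t = lθ/p. Then 0 < t < θ and gcd(t,θ) = 1. -/
/-- Least positive residue of `a` modulo `p` (for `a ≥ 1`, `p ≥ 1`). -/
def lprN (a p : ℕ) : ℕ := (a - 1) % p + 1

/-! Multiplication by the unit `q'` preserves `gcd(·, p)`, so `gcd(l, p) = gcd(p, k)` and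
`θ = p / gcd(l, p)`. Hence `lθ = (l / gcd(l, p)) · p`: `t = l / gcd(l, p)` is the numerator
of `l / p` in lowest terms, and `θ` its denominator. -/

theorem lprN_eq_mod_of_not_dvd {a p : ℕ} (h : ¬ p ∣ a) : lprN a p = a % p := by
  obtain ⟨b, rfl⟩ : ∃ b, a = b + 1 := Nat.exists_eq_add_one.mpr
    (Nat.pos_of_ne_zero fun h0 => h (h0 ▸ dvd_zero p))
  rcases Nat.lt_or_ge p 2 with hp | hp
  · interval_cases p <;> simp_all [lprN]
  have hb : b % p < p := Nat.mod_lt b (by omega)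
  rw [Nat.dvd_iff_mod_eq_zero, Nat.add_mod_eq_ite, Nat.one_mod_eq_one.mpr (by omega)] at h
  rw [lprN, Nat.add_sub_cancel, Nat.add_mod_eq_ite, Nat.one_mod_eq_one.mpr (by omega)]
  split_ifs at h ⊢ <;> omega

theorem Nat.gcd_mul_mod_eq_of_coprime {p u : ℕ} (hu : Nat.Coprime u p) (k : ℕ) :
    Nat.gcd (u * k % p) p = Nat.gcd p k := by
  rw [← Nat.gcd_rec, hu.gcd_mul_left_cancel_right]

theorem Nat.mul_div_gcd_eq_div_gcd_mul (l p : ℕ) :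
    l * (p / Nat.gcd l p) = l / Nat.gcd l p * p := by
  rw [← Nat.mul_div_assoc _ (Nat.gcd_dvd_right l p), Nat.div_mul_right_comm (Nat.gcd_dvd_left l p)]

theorem stmt6_general (p q k q' : ℕ)
    (hk : 0 < k) (hkp : k < p)
    (hq'inv : (q' * q) % p = 1 % p)
    (l θ : ℕ) (hl : l = lprN (q' * k) p) (hθ : θ = p / Nat.gcd p k) :
    p ∣ l * θ ∧ 0 < l * θ / p ∧ l * θ / p < θ ∧ Nat.Coprime (l * θ / p) θ := by
  have hp : 0 < p := hk.trans hkp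
  have hq' : Nat.Coprime q' p := Nat.coprime_of_mul_modEq_one q hq'inv
  have hndvd : ¬ p ∣ q' * k := fun h => by
    have := Nat.le_of_dvd hk (hq'.symm.dvd_of_dvd_mul_left h)
    omega
  have hl' : l = q' * k % p := hl ▸ lprN_eq_mod_of_not_dvd hndvd
  have hlpos : 0 < l := hl' ▸ Nat.pos_of_ne_zero fun h => hndvd (Nat.dvd_of_mod_eq_zero h)
  have hlp : l < p := hl' ▸ Nat.mod_lt _ hp
  have hg : 0 < Nat.gcd l p := Nat.gcd_pos_of_pos_left p hlpos
  rw [hθ, ← Nat.gcd_mul_mod_eq_of_coprime hq', ← hl', Nat.mul_div_gcd_eq_div_gcd_mul,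
    Nat.mul_div_cancel _ hp]
  exact ⟨dvd_mul_left p _, Nat.div_pos (Nat.gcd_le_left p hlpos) hg,
    Nat.div_lt_div_of_lt_of_dvd (Nat.gcd_dvd_right l p) hlp, Nat.coprime_div_gcd_div_gcd hg⟩

/-- With `q'` the inverse of `q` mod `p`, `l = [q'k]_p`, `θ = p / gcd(p,k)`,
and `t = lθ/p`, the number `t` is a positive integer with `t < θ` and
`gcd(t,θ) = 1`. -/
theorem stmt6 (p q k q' : ℕ)
    (hq : 0 < q) (hqp : q < p) (hcop : Nat.Coprime p q)
    (hk : 0 < k) (hkp : k < p)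
    (hq'pos : 0 < q') (hq'lt : q' < p) (hq'inv : (q' * q) % p = 1 % p)
    (l θ : ℕ) (hl : l = lprN (q' * k) p) (hθ : θ = p / Nat.gcd p k) :
    p ∣ l * θ ∧ 0 < l * θ / p ∧ l * θ / p < θ ∧ Nat.Coprime (l * θ / p) θ :=
  stmt6_general p q k q' hk hkp hq'inv l θ hl hθ
end

section
/- Let I = [s, s+p) be an interval of integers and S an affine progression in I of positive difference q (0 < q < p, gcd(p,q)=1) with break point b. If x and x+q both lie in I and x ≠ s and x ≠ b, then x ∈ S if and only if x+q ∈ S. -/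
/-- Least positive residue of `a` modulo `w` (taking values in `1, …, w` for `w > 0`). -/
def lpr (a w : ℤ) : ℤ := (a - 1) % w + 1

/-
Away from `s`, membership in `S` says `x - s = [jq]_p` for some `1 ≤ j ≤ l`. Shifting the residue
`[jq]_p` by `q` inside `[1, p]` gives `[(j ± 1)q]_p`, so as long as `x` and `x + q` stay in `I`
the index moves by one; it leaves `[1, l]` only at `j = l` (where `x = b`) or at `j = 0`
(where `[0]_p = p`, i.e. `x = s + p ∉ I`).
-/

lemma one_le_lpr {a p : ℤ} (hp : 0 < p) : 1 ≤ lpr a p := by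
  have := Int.emod_nonneg (a - 1) hp.ne'
  unfold lpr
  omega

lemma lpr_le {a p : ℤ} (hp : 0 < p) : lpr a p ≤ p := by
  have := Int.emod_lt_of_pos (a - 1) hp
  unfold lpr
  omega

lemma lpr_zero {p : ℤ} (hp : 0 < p) : lpr 0 p = p := by
  have h : (-1 : ℤ) % p = p - 1 := by
    rw [show (-1 : ℤ) = p - 1 + p * (-1) by ring, Int.add_mul_emod_self_left]
    exact Int.emod_eq_of_lt (by omega) (by omega)
  simp [lpr, h]

lemma lpr_add {a c p : ℤ} (h₁ : 1 ≤ lpr a p + c) (h₂ : lpr a p + c ≤ p) :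
    lpr (a + c) p = lpr a p + c := by
  unfold lpr at *
  rw [show a + c - 1 = a - 1 + c by ring, ← Int.emod_add_emod,
    Int.emod_eq_of_lt (by omega) (by omega)]
  ring

theorem stmt9_general (s p q l b : ℤ) (S : Set ℤ)
    (hq : 0 < q)
    (hS : S \ {s} = {x : ℤ | ∃ j : ℤ, 1 ≤ j ∧ j ≤ l ∧ x = s + lpr (j * q) p})
    (hb : b = if l = 0 then s else s + lpr (l * q) p) :
    ∀ x : ℤ, s ≤ x → x + q < s + p → x ≠ s → x ≠ b → (x ∈ S ↔ x + q ∈ S) := by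
  intro x hx hxq hxs hxb
  have hp : 0 < p := by omega
  have mem : ∀ y ≠ s, y ∈ S ↔ ∃ j, 1 ≤ j ∧ j ≤ l ∧ y = s + lpr (j * q) p := fun y hy => by
    simpa [hy] using Set.ext_iff.mp hS y
  rw [mem x hxs, mem (x + q) (by omega)]
  constructor
  · rintro ⟨j, hj1, hjl, rfl⟩
    have hjl' : j ≠ l := by
      rintro rfl
      exact hxb (by rw [hb, if_neg (by omega)])
    refine ⟨j + 1, by omega, by omega, ?_⟩
    rw [add_one_mul, lpr_add (by linarith [one_le_lpr (a := j * q) hp]) (by omega)]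
    ring
  · rintro ⟨j, hj1, hjl, hj⟩
    have hstep : lpr ((j - 1) * q) p = lpr (j * q) p - q := by
      rw [sub_one_mul, sub_eq_add_neg, lpr_add (by omega) (by linarith [lpr_le (a := j * q) hp])]
      ring
    have hj1' : j ≠ 1 := by
      rintro rfl
      rw [sub_self, zero_mul, lpr_zero hp] at hstep
      omega
    exact ⟨j - 1, by omega, by omega, by omega⟩

/-- Periodicity of an affine progression of positive difference `q`:
if `x, x+q ∈ I = [s, s+p)` and `x ≠ s`, `x ≠ b` (the break point), then
`x ∈ S ↔ x + q ∈ S`. -/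
theorem stmt9 (s p q l b : ℤ) (S : Set ℤ)
    (hq : 0 < q) (hqp : q < p) (hcop : IsCoprime p q)
    (hl0 : 0 ≤ l) (hl : l < p)
    (hSsub : S ⊆ Set.Ico s (s + p))
    (hS : S \ {s} = {x : ℤ | ∃ j : ℤ, 1 ≤ j ∧ j ≤ l ∧ x = s + lpr (j * q) p})
    (hb : b = if l = 0 then s else s + lpr (l * q) p) :
    ∀ x : ℤ, s ≤ x → x + q < s + p → x ≠ s → x ≠ b → (x ∈ S ↔ x + q ∈ S) :=
  stmt9_general s p q l b S hq hS hb
end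

section
/- Let S be an affine progression in I = [s, s+p) with difference q > 0 and break point b. Then there exists an integer c such that for every x with x, x+q ∈ I: the number of elements of S in the half-open interval (x, x+q] equals c if x < b, and equals c - 1 if x ≥ b. -/
namespace Int

variable {m p q y : ℤ}

lemma sub_ediv_eq_ediv_sub_ite (hp : 0 < p) (hy : 0 ≤ y) (hyp : y ≤ p) :
    (m - y) / p = m / p - if y ≤ m % p then 0 else 1 := by
  have hm0 := emod_nonneg m hp.ne'
  have hmp := emod_lt_of_pos m hp
  rw [show m - y = (m % p - y) + p * (m / p) by linarith [emod_def m p],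
    add_mul_ediv_left _ _ hp.ne']
  split_ifs
  · rw [ediv_eq_zero_of_lt (by omega) (by omega)]; ring
  · rw [ediv_eq_neg_one_of_neg_of_le (by omega) (by omega)]; ring

lemma ite_emod_mem_Ico_eq_ediv_sub_ediv (hp : 0 < p) (hq : 0 ≤ q) (hy : 0 ≤ y)
    (hyq : y + q ≤ p) :
    (if m % p ∈ Set.Ico y (y + q) then 1 else 0) = (m - y) / p - (m - (y + q)) / p := by
  simp only [Set.mem_Ico]
  rw [sub_ediv_eq_ediv_sub_ite hp hy (by omega), sub_ediv_eq_ediv_sub_ite hp (by omega) hyq]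
  split_ifs <;> omega

end Int

lemma Finset.sum_Icc_one_sub_telescope (g : ℤ → ℤ) {l : ℤ} (hl : 0 ≤ l) :
    ∑ j ∈ Finset.Icc 1 l, (g j - g (j - 1)) = g l - g 0 := by
  induction l, hl using Int.leInduction with
  | base => simp
  | succ n hn ih =>
    rw [← Finset.insert_Icc_right_eq_Icc_add_one (by omega), Finset.sum_insert (by simp), ih,
      add_sub_cancel_right]
    ring

lemma card_filter_mul_sub_one_emod_mem_Ico {p q y l : ℤ} (hp : 0 < p) (hq : 0 < q) (hy : 0 ≤ y)
    (hyq : y + q ≤ p) (hl : 0 ≤ l) :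
    (((Finset.Icc 1 l).filter fun j => (j * q - 1) % p ∈ Set.Ico y (y + q)).card : ℤ)
      = (l * q - 1 - y) / p + 1 := by
  rw [Finset.card_filter, Nat.cast_sum]
  push_cast
  have hterm : ∀ j : ℤ, (j * q - 1 - (y + q)) = (j - 1) * q - 1 - y := fun j => by ring
  simp only [Int.ite_emod_mem_Ico_eq_ediv_sub_ediv hp hq.le hy hyq, hterm]
  rw [Finset.sum_Icc_one_sub_telescope (fun j => (j * q - 1 - y) / p) hl,
    zero_mul, zero_sub, Int.ediv_eq_neg_one_of_neg_of_le (a := -1 - y) (by omega) (by omega)]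
  ring

lemma dvd_sub_of_lpr_eq {a a' w : ℤ} (h : lpr a w = lpr a' w) : w ∣ a' - a := by
  have hmod : a - 1 ≡ a' - 1 [ZMOD w] := by unfold lpr at h; exact add_right_cancel h
  simpa using hmod.dvd

lemma lpr_mul_injOn {p q : ℤ} (hcop : IsCoprime p q) (a : ℤ) :
    Set.InjOn (fun j => lpr (j * q) p) (Set.Ico a (a + p)) := by
  intro j hj j' hj' h
  have hdvd : p ∣ (j' - j) * q := by simpa [sub_mul] using dvd_sub_of_lpr_eq h
  have hzero := Int.eq_zero_of_abs_lt_dvd (hcop.dvd_of_dvd_mul_right hdvd)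
    (abs_lt.2 ⟨by simp at hj hj'; omega, by simp at hj hj'; omega⟩)
  omega

section Progression

variable {s p q l : ℤ} {S : Finset ℤ}

lemma Ioc_inter_eq_image_filter
    (hS : ∀ x : ℤ, x ≠ s → (x ∈ S ↔ ∃ j : ℤ, 1 ≤ j ∧ j ≤ l ∧ x = s + lpr (j * q) p))
    {x z : ℤ} (hx : s ≤ x) :
    Finset.Ioc x z ∩ S =
      ((Finset.Icc 1 l).filter fun j => s + lpr (j * q) p ∈ Finset.Ioc x z).image
        fun j => s + lpr (j * q) p := by
  ext t
  simp only [Finset.mem_inter, Finset.mem_image, Finset.mem_filter, Finset.mem_Icc]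
  constructor
  · rintro ⟨ht, htS⟩
    obtain ⟨j, hj1, hjl, rfl⟩ := (hS t (by simp at ht; omega)).1 htS
    exact ⟨j, ⟨⟨hj1, hjl⟩, ht⟩, rfl⟩
  · rintro ⟨j, ⟨⟨hj1, hjl⟩, ht⟩, rfl⟩
    exact ⟨ht, (hS _ (by simp at ht; omega)).2 ⟨j, hj1, hjl, rfl⟩⟩

lemma card_Ioc_inter_progression (hp : 0 < p) (hq : 0 < q) (hcop : IsCoprime p q)
    (hl0 : 0 ≤ l) (hl : l < p)
    (hS : ∀ x : ℤ, x ≠ s → (x ∈ S ↔ ∃ j : ℤ, 1 ≤ j ∧ j ≤ l ∧ x = s + lpr (j * q) p))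
    {x : ℤ} (hx : s ≤ x) (hxq : x + q ≤ s + p) :
    ((Finset.Ioc x (x + q) ∩ S).card : ℤ) = (l * q - 1 - (x - s)) / p + 1 := by
  have hinj : Set.InjOn (fun j => s + lpr (j * q) p) (Finset.Icc 1 l) := fun j hj j' hj' h =>
    lpr_mul_injOn hcop 1 (by simp at hj ⊢; omega) (by simp at hj' ⊢; omega) (add_left_cancel h)
  rw [Ioc_inter_eq_image_filter hS hx,
    Finset.card_image_of_injOn (hinj.mono (Finset.coe_subset.2 (Finset.filter_subset _ _))),
    ← card_filter_mul_sub_one_emod_mem_Ico hp hq (by omega) (by omega) hl0]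
  congr 3
  ext j
  simp only [Finset.mem_Ioc, Set.mem_Ico, lpr]
  omega

end Progression

theorem stmt10_general (s p q l b : ℤ) (S : Finset ℤ)
    (hq : 0 < q) (hcop : IsCoprime p q)
    (hl0 : 0 ≤ l) (hl : l < p)
    (hS : ∀ x : ℤ, x ≠ s →
      (x ∈ S ↔ ∃ j : ℤ, 1 ≤ j ∧ j ≤ l ∧ x = s + lpr (j * q) p))
    (hb : b = if l = 0 then s else s + lpr (l * q) p) :
    ∃ c : ℤ, ∀ x : ℤ, s ≤ x → x + q < s + p →
      (x < b → ((Finset.Ioc x (x + q) ∩ S).card : ℤ) = c) ∧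
      (b ≤ x → ((Finset.Ioc x (x + q) ∩ S).card : ℤ) = c - 1) := by
  have hp : 0 < p := by omega
  obtain rfl | hlpos := hl0.eq_or_lt
  · refine ⟨1, fun x hx hxq => ⟨fun hxb => by simp only [hb, if_true] at hxb; omega, fun _ => ?_⟩⟩
    rw [card_Ioc_inter_progression hp hq hcop le_rfl hl hS hx hxq.le, zero_mul, zero_sub,
      Int.ediv_eq_neg_one_of_neg_of_le (a := -1 - (x - s)) (by omega) (by omega)]
    rfl
  · refine ⟨(l * q - 1) / p + 1, fun x hx hxq => ?_⟩
    rw [card_Ioc_inter_progression hp hq hcop hl0 hl hS hx hxq.le,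
      Int.sub_ediv_eq_ediv_sub_ite hp (by omega) (by omega)]
    simp only [hb, if_neg hlpos.ne', lpr]
    constructor <;> intro hxb <;> split_ifs <;> omega

/-- For an affine progression `S` in `I = [s, s+p)` of positive difference `q`
and break point `b`, there is an integer `c` such that for `x, x+q ∈ I`,
`|S ∩ (x, x+q]| = c` if `x < b` and `= c - 1` if `x ≥ b`. -/
theorem stmt10 (s p q l b : ℤ) (S : Finset ℤ)
    (hq : 0 < q) (hqp : q < p) (hcop : IsCoprime p q)
    (hl0 : 0 ≤ l) (hl : l < p)
    (hSsub : ∀ x ∈ S, x ∈ Set.Ico s (s + p))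
    (hS : ∀ x : ℤ, x ≠ s →
      (x ∈ S ↔ ∃ j : ℤ, 1 ≤ j ∧ j ≤ l ∧ x = s + lpr (j * q) p))
    (hb : b = if l = 0 then s else s + lpr (l * q) p) :
    ∃ c : ℤ, ∀ x : ℤ, s ≤ x → x + q < s + p →
      (x < b → ((Finset.Ioc x (x + q) ∩ S).card : ℤ) = c) ∧
      (b ≤ x → ((Finset.Ioc x (x + q) ∩ S).card : ℤ) = c - 1) :=
  stmt10_general s p q l b S hq hcop hl0 hl hS hb
end

section
/- Let S be an affine progression in I = [s, s+p) with difference -q (negative difference, q > 0, gcd(p,q)=1) and break point b. Then there exists an integer c such that for every x with x, x-q ∈ I: |S ∩ (x-q, x]| = c if x < b, and |S ∩ (x-q, x]| = c + 1 if x ≥ b. -/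
open Finset

lemma lpr_neg {p : ℤ} (hp : 0 < p) (n : ℤ) : lpr (-n) p = p - n % p := by
  have hn := Int.mul_ediv_add_emod n p
  have h0 := Int.emod_nonneg n hp.ne'
  have h1 := Int.emod_lt_of_pos n hp
  have hmod : (-n - 1) % p = p - 1 - n % p :=
    ((Int.ediv_emod_unique hp).2
      ⟨(by linarith : p - 1 - n % p + p * (-(n / p) - 1) = -n - 1), by linarith, by linarith⟩).2
  rw [lpr, hmod]
  ring

lemma sub_ediv_eq_ite {p c : ℤ} (hp : 0 < p) (hc0 : 0 ≤ c) (hcp : c ≤ p) (m : ℤ) :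
    (m - c) / p = m / p - if c ≤ m % p then 0 else 1 := by
  have hm := Int.mul_ediv_add_emod m p
  have := Int.emod_nonneg m hp.ne'
  have := Int.emod_lt_of_pos m hp
  rw [Int.ediv_eq_iff_of_pos hp]
  split_ifs <;> constructor <;> linarith

lemma ite_emod_mem_Ico_eq {p a q : ℤ} (hp : 0 < p) (ha : 0 ≤ a) (hq : 0 ≤ q) (haq : a + q ≤ p)
    (m : ℤ) :
    (if m % p ∈ Set.Ico a (a + q) then 1 else 0 : ℤ) = (m - a) / p - (m - (a + q)) / p := by
  rw [sub_ediv_eq_ite hp ha (by linarith), sub_ediv_eq_ite hp (by linarith) haq]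
  simp only [Set.mem_Ico]
  split_ifs <;> omega

lemma sum_Icc_one_sub (g : ℤ → ℤ) {l : ℤ} (hl : 0 ≤ l) :
    ∑ j ∈ Icc 1 l, (g j - g (j - 1)) = g l - g 0 := by
  induction l, hl using Int.leInduction with
  | base => simp
  | succ k hk ih =>
    rw [← insert_Icc_right_eq_Icc_add_one (by omega), sum_insert (by simp), ih,
      add_sub_cancel_right]
    ring

lemma card_filter_Icc_emod_mem_Ico {p a q l : ℤ} (hp : 0 < p) (ha : 0 ≤ a) (hq : 0 ≤ q)
    (haq : a + q ≤ p) (hl : 0 ≤ l) :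
    (#{j ∈ Icc 1 l | j * q % p ∈ Set.Ico a (a + q)} : ℤ) = (l * q - a) / p - (-a) / p := by
  rw [card_filter, Nat.cast_sum]
  calc ∑ j ∈ Icc 1 l, ((if j * q % p ∈ Set.Ico a (a + q) then 1 else 0 : ℕ) : ℤ)
      = ∑ j ∈ Icc 1 l, ((j * q - a) / p - ((j - 1) * q - a) / p) := by
        refine sum_congr rfl fun j _ => ?_
        rw [Nat.cast_ite, Nat.cast_one, Nat.cast_zero, ite_emod_mem_Ico_eq hp ha hq haq]
        ring_nf
    _ = (l * q - a) / p - (-a) / p := by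
        rw [sum_Icc_one_sub (fun j => (j * q - a) / p) hl, zero_mul, zero_sub]

lemma injOn_mul_emod {p q : ℤ} (hcop : IsCoprime p q) (c : ℤ) :
    Set.InjOn (fun j => j * q % p) (Set.Ico c (c + p)) := by
  intro i hi j hj hij
  have hdvd : p ∣ (j - i) * q := sub_mul j i q ▸ Int.ModEq.dvd hij
  have := Int.eq_zero_of_abs_lt_dvd (hcop.dvd_of_dvd_mul_right hdvd)
    (abs_sub_lt_iff.2 ⟨by grind, by grind⟩)
  omega

lemma card_Ioc_inter_eq_ediv {s p q l x : ℤ} {S : Finset ℤ} (hp : 0 < p) (hq : 0 ≤ q)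
    (hcop : IsCoprime p q) (hl0 : 0 ≤ l) (hl : l < p)
    (hS : ∀ y : ℤ, y ≠ s → (y ∈ S ↔ ∃ j : ℤ, 1 ≤ j ∧ j ≤ l ∧ y = s + lpr (-(j * q)) p))
    (hx1 : s ≤ x - q) (hx2 : x < s + p) :
    (#(Ioc (x - q) x ∩ S) : ℤ) = (l * q + (x - s)) / p := by
  set f : ℤ → ℤ := fun j => s + lpr (-(j * q)) p
  have hf : ∀ j, f j = s + p - j * q % p := fun j => by simp only [f, lpr_neg hp]; ring
  have hS_erase : S.erase s = (Icc 1 l).image f := by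
    ext y
    simp only [mem_erase, mem_image, mem_Icc]
    constructor
    · rintro ⟨hys, hy⟩
      obtain ⟨j, h1, h2, rfl⟩ := (hS y hys).1 hy
      exact ⟨j, ⟨h1, h2⟩, rfl⟩
    · rintro ⟨j, ⟨h1, h2⟩, rfl⟩
      have hfj : f j ≠ s := by rw [hf]; linarith [Int.emod_lt_of_pos (j * q) hp]
      exact ⟨hfj, (hS _ hfj).2 ⟨j, h1, h2, rfl⟩⟩
  set a := s + p - x
  have hwindow : Ioc (x - q) x ∩ S = {j ∈ Icc 1 l | j * q % p ∈ Set.Ico a (a + q)}.image f := by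
    have hs : s ∉ Ioc (x - q) x ∩ S := by simp only [mem_inter, mem_Ioc]; omega
    rw [← erase_eq_of_notMem hs, ← inter_erase, hS_erase, inter_comm, ← filter_mem_eq_inter,
      filter_image]
    refine congrArg _ (filter_congr fun j _ => ?_)
    rw [hf, mem_Ioc, Set.mem_Ico]
    omega
  have hinj : Set.InjOn f (Icc 1 l) := by
    intro i hi j hj hij
    rw [coe_Icc, Set.mem_Icc] at hi hj
    refine injOn_mul_emod hcop 1 (Set.mem_Ico.2 ⟨hi.1, by omega⟩)
      (Set.mem_Ico.2 ⟨hj.1, by omega⟩) ?_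
    change i * q % p = j * q % p
    rw [hf, hf] at hij
    omega
  rw [hwindow, card_image_of_injOn (hinj.mono (coe_subset.2 (filter_subset _ _))),
    card_filter_Icc_emod_mem_Ico hp (by omega) hq (by omega) hl0,
    Int.ediv_eq_neg_one_of_neg_of_le (a := -a) (by omega) (by omega), sub_neg_eq_add,
    ← Int.add_mul_ediv_right _ _ hp.ne', one_mul]
  congr 1
  ring

lemma break_point_spec {s p q l b : ℤ} (hp : 0 < p) (hcop : IsCoprime p q) (hl0 : 0 ≤ l)
    (hl : l < p) (hb : b = if l = 0 then s else s + lpr (-(l * q)) p) :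
    p ∣ l * q + (b - s) ∧ 0 ≤ b - s ∧ b - s < p := by
  split_ifs at hb with hl'
  · subst hl' hb
    simp [hp]
  · have hndvd : ¬ p ∣ l * q := fun h =>
      hl' (Int.eq_zero_of_dvd_of_nonneg_of_lt hl0 hl (hcop.dvd_of_dvd_mul_right h))
    have hr : l * q % p ≠ 0 := fun h => hndvd (Int.dvd_of_emod_eq_zero h)
    rw [hb, lpr_neg hp, add_sub_cancel_left]
    refine ⟨⟨l * q / p + 1, by linarith [Int.mul_ediv_add_emod (l * q) p]⟩, ?_, ?_⟩
    · linarith [Int.emod_lt_of_pos (l * q) hp]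
    · have := Int.emod_nonneg (l * q) hp.ne'
      omega

lemma add_ediv_eq_ite {p n B y : ℤ} (hp : 0 < p) (hdvd : p ∣ n + B) (hB0 : 0 ≤ B) (hBp : B < p)
    (hy0 : 0 ≤ y) (hyp : y < p) :
    (n + y) / p = (n + B) / p - if B ≤ y then 0 else 1 := by
  obtain ⟨M, hM⟩ := hdvd
  rw [hM, Int.mul_ediv_cancel_left _ hp.ne', Int.ediv_eq_iff_of_pos hp]
  split_ifs <;> constructor <;> linarith

theorem stmt11_general (s p q l b : ℤ) (S : Finset ℤ)
    (hq : 0 < q) (hqp : q < p) (hcop : IsCoprime p q)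
    (hl0 : 0 ≤ l) (hl : l < p)
    (hS : ∀ x : ℤ, x ≠ s →
      (x ∈ S ↔ ∃ j : ℤ, 1 ≤ j ∧ j ≤ l ∧ x = s + lpr (-(j * q)) p))
    (hb : b = if l = 0 then s else s + lpr (-(l * q)) p) :
    ∃ c : ℤ, ∀ x : ℤ, s ≤ x - q → x < s + p →
      (x < b → ((Finset.Ioc (x - q) x ∩ S).card : ℤ) = c) ∧
      (b ≤ x → ((Finset.Ioc (x - q) x ∩ S).card : ℤ) = c + 1) := by
  have hp : 0 < p := hq.trans hqp
  obtain ⟨hdvd, hb0, hbp⟩ := break_point_spec hp hcop hl0 hl hb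
  refine ⟨(l * q + (b - s)) / p - 1, fun x hx1 hx2 => ?_⟩
  rw [card_Ioc_inter_eq_ediv hp hq.le hcop hl0 hl hS hx1 hx2,
    add_ediv_eq_ite hp hdvd hb0 hbp (by omega) (by omega)]
  constructor <;> intro hx <;> split_ifs <;> omega

/-- For an affine progression `S` in `I = [s, s+p)` of difference `-q` (with
`q > 0`) and break point `b`, there is an integer `c` such that for
`x, x-q ∈ I`, `|S ∩ (x-q, x]| = c` if `x < b` and `= c + 1` if `x ≥ b`. -/
theorem stmt11 (s p q l b : ℤ) (S : Finset ℤ)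
    (hq : 0 < q) (hqp : q < p) (hcop : IsCoprime p q)
    (hl0 : 0 ≤ l) (hl : l < p)
    (hSsub : ∀ x ∈ S, x ∈ Set.Ico s (s + p))
    (hS : ∀ x : ℤ, x ≠ s →
      (x ∈ S ↔ ∃ j : ℤ, 1 ≤ j ∧ j ≤ l ∧ x = s + lpr (-(j * q)) p))
    (hb : b = if l = 0 then s else s + lpr (-(l * q)) p) :
    ∃ c : ℤ, ∀ x : ℤ, s ≤ x - q → x < s + p →
      (x < b → ((Finset.Ioc (x - q) x ∩ S).card : ℤ) = c) ∧
      (b ≤ x → ((Finset.Ioc (x - q) x ∩ S).card : ℤ) = c + 1) :=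
  stmt11_general s p q l b S hq hqp hcop hl0 hl hS hb
end

section
/- Let p, q be coprime with 0 < q < p, write p = dq + r with r = [p]_q. Let I = [s, s+p) and J = [y, y+q) ⊂ I, and let f_{I,q}(x) = [x - s + q]_p + s be the cycle map on I, and f_{J,-r}(x) = [x - y - r]_q + y be the cycle map on J. Then for any x ∈ [y, y+q], the first return of x to J under iteration of f_{I,q} equals f_{J,-r}(x). -/
/-!
After `n + 1` steps the cycle map on `I` sends `x` to `x + (n + 1) q` reduced into `I`, i.e. to
`x + (n + 1) q` or `x + (n + 1) q - p`. Starting from `x ∈ [y, y + q]`, the first option never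
lands in `J` and the second lands in `J` exactly at the first `t` with `x + t q ≥ p + y`; then
`x + t q - p ≡ x - r (mod q)` and it lies in `[y, y + q)`, so it is `f_{J,-r}(x)`.
-/

/-- The map `f_{I,a}` rotating `I = [s, s + p)` by `a`. -/
def cycleMap (s p a z : ℤ) : ℤ := (z - s + a) % p + s

lemma cycleMap_iterate_succ (s p a x : ℤ) (n : ℕ) :
    (cycleMap s p a)^[n + 1] x = (x - s + (n + 1) * a) % p + s := by
  induction n with
  | zero => simp [cycleMap]
  | succ n ih =>
    rw [Function.iterate_succ_apply', ih, cycleMap, add_sub_cancel_right, Int.emod_add_emod]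
    push_cast
    ring_nf

lemma exists_nat_mul_lt_le_succ_mul {q m : ℤ} (hq : 0 < q) (hm : 0 < m) :
    ∃ n : ℕ, n * q < m ∧ m ≤ (n + 1) * q := by
  have hdiv := Int.emod_add_mul_ediv (m - 1) q
  have hmod := Int.emod_lt_of_pos (m - 1) hq
  have hmod₀ := Int.emod_nonneg (m - 1) hq.ne'
  have hquot : 0 ≤ (m - 1) / q := Int.ediv_nonneg (by omega) hq.le
  refine ⟨((m - 1) / q).toNat, ?_⟩
  rw [Int.toNat_of_nonneg hquot]
  constructor <;> nlinarith

section FirstReturn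

variable {s p q y x : ℤ} {n : ℕ}

lemma cycleMap_iterate_succ_eq_sub (hJl : s ≤ y) (hJr : y + q ≤ s + p)
    (hlt : n * q < p + y - x) (hle : p + y - x ≤ (n + 1) * q) :
    (cycleMap s p q)^[n + 1] x = x + (n + 1) * q - p := by
  have hstep : (n + 1) * q = n * q + q := by ring
  rw [cycleMap_iterate_succ, Int.emod_eq_sub_self_emod, Int.emod_eq_of_lt (by omega) (by omega)]
  ring

lemma cycleMap_iterate_succ_notMem_Ico (hJl : s ≤ y) (hJr : y + q ≤ s + p) (hq : 0 < q)
    (hx : y ≤ x) (hlt : (n + 1) * q < p + y - x) :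
    (cycleMap s p q)^[n + 1] x ∉ Set.Ico y (y + q) := by
  have hstep : (n + 1) * q = n * q + q := by ring
  have hnq : 0 ≤ (n : ℤ) * q := by positivity
  rw [cycleMap_iterate_succ, Set.mem_Ico, not_and_or, not_le, not_lt]
  rcases lt_or_ge (x - s + (n + 1) * q) p with hwrap | hwrap
  · right
    rw [Int.emod_eq_of_lt (by omega) hwrap]
    omega
  · left
    rw [Int.emod_eq_sub_self_emod, Int.emod_eq_of_lt (by omega) (by omega)]
    omega

end FirstReturn

theorem stmt12_general (s p q r y : ℤ)
    (hq : 0 < q) (hqp : q < p)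
    (hr : r = p % q)
    (hJl : s ≤ y) (hJr : y + q ≤ s + p) :
    ∀ x : ℤ, y ≤ x → x ≤ y + q →
      ∃ t : ℕ, 0 < t ∧
        (fun z : ℤ => (z - s + q) % p + s)^[t] x = (x - y - r) % q + y ∧
        ∀ u : ℕ, 0 < u → u < t →
          (fun z : ℤ => (z - s + q) % p + s)^[u] x ∉ Set.Ico y (y + q) := by
  intro x hxl hxr
  change ∃ t : ℕ, 0 < t ∧ (cycleMap s p q)^[t] x = _ ∧ ∀ u : ℕ, 0 < u → u < t →
    (cycleMap s p q)^[u] x ∉ Set.Ico y (y + q)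
  obtain ⟨n, hlt, hle⟩ := exists_nat_mul_lt_le_succ_mul hq (show 0 < p + y - x by omega)
  refine ⟨n + 1, n.succ_pos, ?_, ?_⟩
  · have hp := Int.emod_add_mul_ediv p q
    have hstep : (n + 1) * q = n * q + q := by ring
    have hret : (x - y - r) % q = x + (n + 1) * q - p - y := by
      rw [show x - y - r = x + (n + 1) * q - p - y + q * (p / q - (n + 1)) by
          linear_combination -hr - hp,
        Int.add_mul_emod_self_left, Int.emod_eq_of_lt (by omega) (by omega)]
    rw [cycleMap_iterate_succ_eq_sub hJl hJr hlt hle, hret]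
    ring
  · rintro (_ | k) _ hkn
    · omega
    have hkn' : (k : ℤ) + 1 ≤ n := by exact_mod_cast Nat.lt_succ_iff.mp hkn
    have hkq : ((k : ℤ) + 1) * q < p + y - x :=
      (mul_le_mul_of_nonneg_right hkn' hq.le).trans_lt hlt
    exact cycleMap_iterate_succ_notMem_Ico hJl hJr hq hxl hkq

/-- First return lemma: for `J = [y, y+q) ⊂ I = [s, s+p)` and `r = [p]_q`,
the first return of any `x ∈ [y, y+q]` to `J` under iteration of the
cycle-`I`-by-`q` map equals the value of the cycle-`J`-by-`(-r)` map at `x`. -/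
theorem stmt12 (s p q r y : ℤ)
    (hq : 0 < q) (hqp : q < p) (hcop : IsCoprime p q)
    (hr : r = p % q)
    (hJl : s ≤ y) (hJr : y + q ≤ s + p) :
    ∀ x : ℤ, y ≤ x → x ≤ y + q →
      ∃ t : ℕ, 0 < t ∧
        (fun z : ℤ => (z - s + q) % p + s)^[t] x = (x - y - r) % q + y ∧
        ∀ u : ℕ, 0 < u → u < t →
          (fun z : ℤ => (z - s + q) % p + s)^[u] x ∉ Set.Ico y (y + q) :=
  stmt12_general s p q r y hq hqp hr hJl hJr
end

section
/- Let S be an affine progression in I = [s, s+p) with difference εq (ε = ±1) and break point b, and let r = [p]_q. If J = [y, y+q) ⊂ I with y ∈ {s, b, s+p-q}, then S ∩ J is an affine progression in J; its difference is εr if y = b, and -εr otherwise. -/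
/-- `S` is an affine progression in `[s, s+w)` of difference `d` and length `l`. -/
def IsAffProg (S : Set ℤ) (s w d l : ℤ) : Prop :=
  S ⊆ Set.Ico s (s + w) ∧
    S \ {s} = {x : ℤ | ∃ j : ℤ, 1 ≤ j ∧ j ≤ l ∧ x = s + lpr (j * d) w}

section lpr

variable {w : ℤ}

lemma one_le_lpr_s13 (hw : 0 < w) (a : ℤ) : 1 ≤ lpr a w := by
  have := Int.emod_nonneg (a - 1) hw.ne'
  unfold lpr; omega

lemma lpr_le_s13 (hw : 0 < w) (a : ℤ) : lpr a w ≤ w := by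
  have := Int.emod_lt_of_pos (a - 1) hw
  unfold lpr; omega

lemma lpr_modEq (w a : ℤ) : lpr a w ≡ a [ZMOD w] := by
  have := (Int.mod_modEq (a - 1) w).add_right 1
  rwa [sub_add_cancel] at this

lemma lpr_eq_of_modEq {a x : ℤ} (h1 : 1 ≤ x) (hxw : x ≤ w) (h : x ≡ a [ZMOD w]) :
    lpr a w = x := by
  have hmod : (a - 1) % w = (x - 1) % w := (h.sub_right 1).symm
  rw [lpr, hmod, Int.emod_eq_of_lt (by omega) (by omega)]
  ring

lemma lpr_lt (hw : 0 < w) {a : ℤ} (h : ¬ w ∣ a) : lpr a w < w := by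
  refine lt_of_le_of_ne (lpr_le_s13 hw a) fun heq => h ?_
  have h' := lpr_modEq w a
  rw [heq] at h'
  exact Int.modEq_zero_iff_dvd.mp (h'.symm.trans Int.modulus_modEq_zero)

lemma lpr_mul_lt (hw : 0 < w) {d : ℤ} (hd : IsCoprime d w) {k : ℤ} (hk1 : 1 ≤ k) (hkw : k < w) :
    lpr (k * d) w < w := by
  refine lpr_lt hw fun hdvd => ?_
  have := Int.le_of_dvd (by omega) (hd.symm.dvd_of_dvd_mul_right hdvd)
  omega

lemma exists_lpr_mul_eq (hw : 0 < w) {d : ℤ} (hd : IsCoprime d w) {t : ℤ} (ht1 : 1 ≤ t)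
    (htw : t < w) : ∃ k, 1 ≤ k ∧ k < w ∧ lpr (k * d) w = t := by
  obtain ⟨u, v, huv⟩ := hd
  have hk : lpr (t * u) w * d ≡ t [ZMOD w] :=
    ((lpr_modEq w (t * u)).mul_right d).trans
      (Int.modEq_iff_dvd.mpr ⟨t * v, by linear_combination (-t) * huv⟩)
  refine ⟨lpr (t * u) w, one_le_lpr_s13 hw _, lt_of_le_of_ne (lpr_le_s13 hw _) fun heq => ?_,
    lpr_eq_of_modEq ht1 htw.le hk.symm⟩
  rw [heq] at hk
  have := Int.le_of_dvd (by omega) <| Int.modEq_zero_iff_dvd.mp <|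
    hk.symm.trans (Int.modEq_zero_iff_dvd.mpr (dvd_mul_right w d))
  omega

end lpr

lemma exists_lpr_mul_eq_iff {p d l x j₀ : ℤ} (hd : IsCoprime p d) (hx1 : 1 ≤ x) (hxp : x ≤ p)
    (hj₀ : j₀ * d ≡ x [ZMOD p]) (hlo : l - p < j₀) (hup : j₀ ≤ p) :
    (∃ j, 1 ≤ j ∧ j ≤ l ∧ lpr (j * d) p = x) ↔ 1 ≤ j₀ ∧ j₀ ≤ l := by
  constructor
  · rintro ⟨j, hj1, hjl, hj⟩
    have hmod : j * d ≡ j₀ * d [ZMOD p] := (hj ▸ lpr_modEq p (j * d)).symm.trans hj₀.symm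
    have hdvd : p ∣ (j₀ - j) * d := by
      rw [sub_mul]; exact Int.modEq_iff_dvd.mp hmod
    have := Int.eq_zero_of_abs_lt_dvd (hd.dvd_of_dvd_mul_right hdvd)
      (abs_lt.mpr ⟨by omega, by omega⟩)
    omega
  · rintro ⟨h1, hl⟩
    exact ⟨j₀, h1, hl, lpr_eq_of_modEq hx1 hxp hj₀.symm⟩

lemma exists_forall_iff_le_of_antitone {n : ℤ} {Q : ℤ → Prop} (hn : 0 ≤ n)
    (hQ : ∀ k₁ k₂, 1 ≤ k₁ → k₁ ≤ k₂ → k₂ ≤ n → Q k₂ → Q k₁) :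
    ∃ m, 0 ≤ m ∧ m ≤ n ∧ ∀ k, 1 ≤ k → k ≤ n → (Q k ↔ k ≤ m) := by
  obtain ⟨m, ⟨hm0, hmn, hmQ⟩, hmax⟩ := Int.exists_greatest_of_bdd
    (P := fun m => 0 ≤ m ∧ m ≤ n ∧ ∀ k, 1 ≤ k → k ≤ m → Q k)
    ⟨n, fun _ h => h.2.1⟩ ⟨0, le_rfl, hn, fun _ _ _ => by omega⟩
  refine ⟨m, hm0, hmn, fun k hk1 hkn => ⟨fun hk => ?_, fun hkm => hmQ k hk1 hkm⟩⟩
  by_contra! hmk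
  have := hmax (m + 1) ⟨by omega, by omega, fun k' hk'1 hk' => ?_⟩
  · omega
  · rcases (show k' ≤ m ∨ k' = m + 1 by omega) with h | rfl
    · exact hmQ k' hk'1 h
    · exact hQ _ k hk'1 (by omega) hkn hk

/-- `stepCount p q σ k` steps of size `σ * q` move a point of `ℤ / p` by
`lpr (k * -(σ * (p % q))) q`. -/
def stepCount (p q σ k : ℤ) : ℤ := (k * p + σ * lpr (k * -(σ * (p % q))) q) / q

section stepCount

variable {p q σ : ℤ}

lemma isCoprime_neg_mul_emod (hσ : σ = 1 ∨ σ = -1) (hcop : IsCoprime p q) :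
    IsCoprime (-(σ * (p % q))) q := by
  have hr : IsCoprime (p % q) q := .of_add_mul_left_left (by rwa [Int.emod_add_mul_ediv])
  rcases hσ with rfl | rfl <;> simpa [IsCoprime.neg_left_iff] using hr

lemma mul_stepCount (hσ : σ = 1 ∨ σ = -1) (k : ℤ) :
    q * stepCount p q σ k = k * p + σ * lpr (k * -(σ * (p % q))) q := by
  refine Int.mul_ediv_cancel' ?_
  obtain ⟨u, hu⟩ := Int.modEq_iff_dvd.mp (lpr_modEq q (k * -(σ * (p % q))))
  have hp := Int.emod_add_mul_ediv p q
  have hσσ : σ * σ = 1 := by rcases hσ with rfl | rfl <;> norm_num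
  exact ⟨k * (p / q) - σ * u,
    by linear_combination (-σ) * hu + (-k) * hp + (-k * (p % q)) * hσσ⟩

lemma stepCount_mem (hσ : σ = 1 ∨ σ = -1) (hq : 0 < q) (hqp : q < p) (hcop : IsCoprime p q)
    {k : ℤ} (hk1 : 1 ≤ k) (hkq : k < q) :
    1 ≤ stepCount p q σ k ∧ stepCount p q σ k < p ∧ (σ = 1 → 2 ≤ stepCount p q σ k) := by
  have h := mul_stepCount (p := p) (q := q) hσ k
  have hτ1 := one_le_lpr_s13 hq (k * -(σ * (p % q)))
  have hτq := lpr_mul_lt hq (isCoprime_neg_mul_emod hσ hcop) hk1 hkq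
  have hkp : p ≤ k * p := by nlinarith
  have hkp' : k * p ≤ (q - 1) * p := by nlinarith
  refine ⟨?_, ?_, ?_⟩
  · rcases hσ with rfl | rfl <;> nlinarith
  · rcases hσ with rfl | rfl <;> nlinarith
  · rintro rfl; nlinarith

lemma stepCount_lt_stepCount (hσ : σ = 1 ∨ σ = -1) (hq : 0 < q) (hqp : q < p)
    (hcop : IsCoprime p q) {k₁ k₂ : ℤ} (hk₁ : 1 ≤ k₁) (hk₁₂ : k₁ < k₂) (hk₂ : k₂ < q) :
    stepCount p q σ k₁ < stepCount p q σ k₂ := by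
  have h₁ := mul_stepCount (p := p) (q := q) hσ k₁
  have h₂ := mul_stepCount (p := p) (q := q) hσ k₂
  have hτ₁ := one_le_lpr_s13 hq (k₁ * -(σ * (p % q)))
  have hτ₂ := one_le_lpr_s13 hq (k₂ * -(σ * (p % q)))
  have hτ₁q := lpr_mul_lt hq (isCoprime_neg_mul_emod hσ hcop) hk₁ (hk₁₂.trans hk₂)
  have hτ₂q := lpr_mul_lt hq (isCoprime_neg_mul_emod hσ hcop) (hk₁.trans hk₁₂.le) hk₂
  have hkp : p ≤ (k₂ - k₁) * p := by nlinarith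
  rcases hσ with rfl | rfl <;> nlinarith

end stepCount

lemma exists_window_offsets_iff {p q l c a₀ η ε M : ℤ} (hε : ε = 1 ∨ ε = -1) (hη : η = 1 ∨ η = -1)
    (hq : 0 < q) (hqp : q < p) (hcop : IsCoprime p q) (hc : 0 ≤ c) (hcq : c + q ≤ p)
    (ha₀ : a₀ * (ε * q) ≡ c [ZMOD p])
    (hwin : ∀ G, 1 ≤ G → G < p → (η * ε = 1 → 2 ≤ G) →
      l - p < a₀ + η * G ∧ a₀ + η * G ≤ p ∧ (1 ≤ a₀ + η * G ∧ a₀ + η * G ≤ l ↔ G ≤ M)) :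
    ∃ l', 0 ≤ l' ∧ l' < q ∧ ∀ t,
      (1 ≤ t ∧ t < q ∧ ∃ j, 1 ≤ j ∧ j ≤ l ∧ lpr (j * (ε * q)) p = c + t) ↔
        ∃ k, 1 ≤ k ∧ k ≤ l' ∧ t = lpr (k * -(η * ε * (p % q))) q := by
  have hσ : η * ε = 1 ∨ η * ε = -1 := by
    rcases hε with rfl | rfl <;> rcases hη with rfl | rfl <;> norm_num
  have hd := isCoprime_neg_mul_emod hσ hcop
  have hεq : IsCoprime p (ε * q) := by
    rcases hε with rfl | rfl <;> simpa [IsCoprime.neg_right_iff] using hcop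
  have hmem : ∀ k, 1 ≤ k → k < q →
      ((∃ j, 1 ≤ j ∧ j ≤ l ∧ lpr (j * (ε * q)) p = c + lpr (k * -(η * ε * (p % q))) q) ↔
        stepCount p q (η * ε) k ≤ M) := by
    intro k hk1 hkq
    obtain ⟨hG1, hGp, hG2⟩ := stepCount_mem hσ hq hqp hcop hk1 hkq
    obtain ⟨hlo, hup, hiff⟩ := hwin _ hG1 hGp hG2
    have hτ1 := one_le_lpr_s13 hq (k * -(η * ε * (p % q)))
    have hτq := lpr_mul_lt hq hd hk1 hkq
    rw [← hiff]
    refine exists_lpr_mul_eq_iff hεq (by omega) (by omega) ?_ hlo hup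
    have h := mul_stepCount (p := p) (q := q) hσ k
    have hσσ : η * ε * (η * ε) = 1 := by rcases hσ with h | h <;> rw [h] <;> norm_num
    rw [show (a₀ + η * stepCount p q (η * ε) k) * (ε * q) =
        a₀ * (ε * q) + lpr (k * -(η * ε * (p % q))) q + p * (η * ε * k) by
      linear_combination (η * ε) * h + lpr (k * -(η * ε * (p % q))) q * hσσ]
    exact Int.add_modulus_mul_modEq_iff.mpr (ha₀.add_right _)
  obtain ⟨l', hl'0, hl'q, hl'⟩ := exists_forall_iff_le_of_antitone
    (n := q - 1) (Q := fun k => stepCount p q (η * ε) k ≤ M) (by omega)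
    fun k₁ k₂ hk₁ hk₁₂ hk₂ hQ => hk₁₂.eq_or_lt.elim (fun h => h ▸ hQ) fun h =>
      (stepCount_lt_stepCount hσ hq hqp hcop hk₁ h (by omega)).le.trans hQ
  refine ⟨l', hl'0, by omega, fun t => ⟨?_, ?_⟩⟩
  · rintro ⟨ht1, htq, hj⟩
    obtain ⟨k, hk1, hkq, rfl⟩ := exists_lpr_mul_eq hq hd ht1 htq
    exact ⟨k, hk1, (hl' k hk1 (by omega)).1 ((hmem k hk1 hkq).1 hj), rfl⟩
  · rintro ⟨k, hk1, hkl', rfl⟩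
    have hkq : k < q := by omega
    exact ⟨one_le_lpr_s13 hq _, lpr_mul_lt hq hd hk1 hkq,
      (hmem k hk1 hkq).2 ((hl' k hk1 (by omega)).2 hkl')⟩

lemma isAffProg_inter_Ico {S : Set ℤ} {s p d l y q d' l' : ℤ} (hS : IsAffProg S s p d l)
    (hsy : s ≤ y)
    (hT : ∀ t, (1 ≤ t ∧ t < q ∧ ∃ j, 1 ≤ j ∧ j ≤ l ∧ lpr (j * d) p = y - s + t) ↔
      ∃ k, 1 ≤ k ∧ k ≤ l' ∧ t = lpr (k * d') q) :
    IsAffProg (S ∩ Set.Ico y (y + q)) y q d' l' := by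
  refine ⟨Set.inter_subset_right, Set.ext fun x => ?_⟩
  have hSx : x ∈ S \ {s} ↔ ∃ j, 1 ≤ j ∧ j ≤ l ∧ x = s + lpr (j * d) p := by
    rw [hS.2]; rfl
  simp only [Set.mem_sdiff, Set.mem_inter_iff, Set.mem_Ico, Set.mem_singleton_iff,
    Set.mem_ofPred_eq] at hSx ⊢
  constructor
  · rintro ⟨⟨hxS, hyx, hxq⟩, hxy⟩
    obtain ⟨j, hj1, hjl, hj⟩ := hSx.1 ⟨hxS, by omega⟩
    obtain ⟨k, hk1, hkl', hk⟩ := (hT (x - y)).1 ⟨by omega, by omega, j, hj1, hjl, by omega⟩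
    exact ⟨k, hk1, hkl', by omega⟩
  · rintro ⟨k, hk1, hkl', rfl⟩
    obtain ⟨ht1, htq, j, hj1, hjl, hj⟩ := (hT _).2 ⟨k, hk1, hkl', rfl⟩
    exact ⟨⟨(hSx.2 ⟨j, hj1, hjl, by omega⟩).1, by omega, by omega⟩, by omega⟩

lemma exists_isAffProg_inter_Ico {S : Set ℤ} {s p q l y a₀ η ε M : ℤ} (hε : ε = 1 ∨ ε = -1)
    (hη : η = 1 ∨ η = -1) (hq : 0 < q) (hqp : q < p) (hcop : IsCoprime p q)
    (hS : IsAffProg S s p (ε * q) l) (hsy : s ≤ y) (hyq : y + q ≤ s + p)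
    (ha₀ : a₀ * (ε * q) ≡ y - s [ZMOD p])
    (hwin : ∀ G, 1 ≤ G → G < p → (η * ε = 1 → 2 ≤ G) →
      l - p < a₀ + η * G ∧ a₀ + η * G ≤ p ∧ (1 ≤ a₀ + η * G ∧ a₀ + η * G ≤ l ↔ G ≤ M)) :
    ∃ l', 0 ≤ l' ∧ l' < q ∧
      IsAffProg (S ∩ Set.Ico y (y + q)) y q (-(η * ε * (p % q))) l' := by
  obtain ⟨l', hl'0, hl'q, hT⟩ :=
    exists_window_offsets_iff hε hη hq hqp hcop (by omega) (by omega) ha₀ hwin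
  exact ⟨l', hl'0, hl'q, isAffProg_inter_Ico hS hsy hT⟩

theorem stmt13_general (s p q l b y : ℤ) (ε : ℤ) (S : Set ℤ)
    (hε : ε = 1 ∨ ε = -1)
    (hq : 0 < q) (hqp : q < p) (hcop : IsCoprime p q)
    (hl : l < p)
    (hS : IsAffProg S s p (ε * q) l)
    (hb : b = if l = 0 then s else s + lpr (l * (ε * q)) p)
    (hy : y = s ∨ y = b ∨ y = s + p - q)
    (hJl : s ≤ y) (hJr : y + q ≤ s + p) :
    ∃ l' : ℤ, 0 ≤ l' ∧ l' < q ∧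
      IsAffProg (S ∩ Set.Ico y (y + q)) y q
        (if y = b then ε * (p % q) else -(ε * (p % q))) l' := by
  by_cases hyb : y = b
  · have hbl : l * (ε * q) ≡ y - s [ZMOD p] := by
      split_ifs at hb with hl0
      · simp [hyb, hb, hl0, Int.ModEq]
      · rw [hyb, hb, add_sub_cancel_left]; exact (lpr_modEq p _).symm
    rw [if_pos hyb, show ε * (p % q) = -(-1 * ε * (p % q)) by ring]
    exact exists_isAffProg_inter_Ico (η := -1) (M := l - 1) hε (Or.inr rfl) hq hqp hcop hS hJl
      hJr hbl fun G _ _ _ => ⟨by omega, by omega, by omega⟩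
  rw [if_neg hyb, show -(ε * (p % q)) = -(1 * ε * (p % q)) by ring]
  obtain hys | hys := hy.imp_right (Or.resolve_left · hyb)
  · exact exists_isAffProg_inter_Ico (η := 1) (a₀ := 0) (M := l) hε (Or.inl rfl) hq hqp hcop hS
      hJl hJr (by simp [hys, Int.ModEq]) fun G _ _ _ => ⟨by omega, by omega, by omega⟩
  · have hεq : -ε * (ε * q) ≡ y - s [ZMOD p] := by
      refine Int.modEq_iff_dvd.mpr ⟨1, ?_⟩
      rcases hε with rfl | rfl <;> rw [hys] <;> ring
    refine exists_isAffProg_inter_Ico (η := 1) (M := l + ε) hε (Or.inl rfl) hq hqp hcop hS hJl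
      hJr hεq fun G _ _ hG2 => ?_
    rcases hε with rfl | rfl
    · have := hG2 (by norm_num); omega
    · omega

/-- Restriction lemma: an affine progression `S` in `I = [s, s+p)` of
difference `εq` and break point `b` restricts to an affine progression on
`J = [y, y+q)` for `y ∈ {s, b, s+p-q}`, of difference `εr` if `y = b` and
`-εr` otherwise, where `r = [p]_q`. -/
theorem stmt13 (s p q l b y : ℤ) (ε : ℤ) (S : Set ℤ)
    (hε : ε = 1 ∨ ε = -1)
    (hq : 0 < q) (hqp : q < p) (hcop : IsCoprime p q)
    (hl0 : 0 ≤ l) (hl : l < p)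
    (hS : IsAffProg S s p (ε * q) l)
    (hb : b = if l = 0 then s else s + lpr (l * (ε * q)) p)
    (hy : y = s ∨ y = b ∨ y = s + p - q)
    (hJl : s ≤ y) (hJr : y + q ≤ s + p) :
    ∃ l' : ℤ, 0 ≤ l' ∧ l' < q ∧
      IsAffProg (S ∩ Set.Ico y (y + q)) y q
        (if y = b then ε * (p % q) else -(ε * (p % q))) l' :=
  stmt13_general s p q l b y ε S hε hq hqp hcop hl hS hb hy hJl hJr
end

section
/- Let p = θb and r = θc where θ, b, c are positive integers, and suppose p and q are coprime with (-1)^i θc = p_i q - p q_i and θb = θc·p_{i-1} + p_i·r_{i-1} for continued fraction data of p/q, where θ | p_i. Then b = c·p_{i-1} + (p_i/θ)·r_{i-1} ≥ 1 + r_{i-1} ≥ 2 + θc ≥ 2 + θ, hence p ≥ θ(θ+2). -/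
/-!
Cancelling `θ` in `θb = θc·p_{i-1} + pᵢ·r_{i-1}` (legitimate as `θ ∣ pᵢ`) gives
`b = c·p_{i-1} + (pᵢ/θ)·r_{i-1}`. Every factor on the right is at least `1`, so
`b ≥ 1 + r_{i-1} ≥ 2 + θc ≥ 2 + θ`, and multiplying by `θ` bounds `p = θb`.
-/

lemma Int.eq_mul_add_ediv_mul_of_mul_eq {θ b c x y z : ℤ} (hθ : θ ≠ 0) (hdvd : θ ∣ y)
    (h : θ * b = θ * c * x + y * z) : b = c * x + y / θ * z := by
  refine mul_left_cancel₀ hθ ?_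
  calc θ * b = θ * c * x + θ * (y / θ) * z := by rw [h, Int.mul_ediv_cancel' hdvd]
    _ = θ * (c * x + y / θ * z) := by ring

lemma Int.one_add_le_mul_add_mul {c x d z : ℤ} (hc : 1 ≤ c) (hx : 1 ≤ x) (hd : 1 ≤ d)
    (hz : 0 ≤ z) : 1 + z ≤ c * x + d * z := by
  have hcx : 1 ≤ c * x := one_le_mul_of_one_le_of_one_le hc hx
  have hdz : z ≤ d * z := le_mul_of_one_le_left hz hd
  linarith

theorem stmt16_general (p θ b c : ℕ) (pi pim rim : ℤ)
    (hθ : 1 < θ) (hc : 0 < c)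
    (hp : (p : ℤ) = (θ : ℤ) * b)
    (h2 : (θ : ℤ) * b = (θ : ℤ) * c * pim + pi * rim)
    (hdvd : (θ : ℤ) ∣ pi)
    (hpim : 1 ≤ pim) (hpi : (θ : ℤ) ≤ pi)
    (hrim : (θ : ℤ) * c < rim) :
    (b : ℤ) = (c : ℤ) * pim + (pi / (θ : ℤ)) * rim ∧
    1 + rim ≤ (b : ℤ) ∧ 2 + (θ : ℤ) * c ≤ (b : ℤ) ∧ 2 + (θ : ℤ) ≤ (b : ℤ) ∧
    (θ : ℤ) * ((θ : ℤ) + 2) ≤ (p : ℤ) := by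
  have hθ0 : (0 : ℤ) < θ := by omega
  have hc1 : (1 : ℤ) ≤ c := by omega
  have hb : (b : ℤ) = c * pim + pi / θ * rim :=
    Int.eq_mul_add_ediv_mul_of_mul_eq hθ0.ne' hdvd h2
  have hquot : 1 ≤ pi / θ := Int.le_ediv_of_mul_le hθ0 (by linarith)
  have hθc : (θ : ℤ) ≤ θ * c := le_mul_of_one_le_right hθ0.le hc1
  have hb1 : 1 + rim ≤ (b : ℤ) := hb ▸ Int.one_add_le_mul_add_mul hc1 hpim hquot (by linarith)
  have hb2 : 2 + (θ : ℤ) * c ≤ b := by linarith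
  have hb3 : 2 + (θ : ℤ) ≤ b := by linarith
  exact ⟨hb, hb1, hb2, hb3, hp ▸ mul_le_mul_of_nonneg_left (by linarith) hθ0.le⟩

/-- Arithmetic core of the order bound: if `p = θb`, `rᵢ = θc`,
`(-1)^i θc = pᵢ q - p qᵢ`, `θb = θc·p_{i-1} + pᵢ·r_{i-1}`, `θ ∣ pᵢ`,
`p_{i-1} ≥ 1`, `pᵢ/θ ≥ 1`, `r_{i-1} > θc`, then
`b = c·p_{i-1} + (pᵢ/θ)·r_{i-1} ≥ 1 + r_{i-1} ≥ 2 + θc ≥ 2 + θ`, hence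
`p ≥ θ(θ+2)`. -/
theorem stmt16 (p q θ b c i : ℕ) (pi qi pim rim : ℤ)
    (hθ : 1 < θ) (hb : 0 < b) (hc : 0 < c)
    (hp : (p : ℤ) = (θ : ℤ) * b)
    (hcop : Nat.Coprime p q)
    (h1 : (-1 : ℤ) ^ i * ((θ : ℤ) * c) = pi * (q : ℤ) - (p : ℤ) * qi)
    (h2 : (θ : ℤ) * b = (θ : ℤ) * c * pim + pi * rim)
    (hdvd : (θ : ℤ) ∣ pi)
    (hpim : 1 ≤ pim) (hpi : (θ : ℤ) ≤ pi)
    (hrim : (θ : ℤ) * c < rim) :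
    (b : ℤ) = (c : ℤ) * pim + (pi / (θ : ℤ)) * rim ∧
    1 + rim ≤ (b : ℤ) ∧ 2 + (θ : ℤ) * c ≤ (b : ℤ) ∧ 2 + (θ : ℤ) ≤ (b : ℤ) ∧
    (θ : ℤ) * ((θ : ℤ) + 2) ≤ (p : ℤ) :=
  stmt16_general p θ b c pi pim rim hθ hc hp h2 hdvd hpim hpi hrim
end
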